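/- arXiv:2407.00139 — 3 statements merged into one kernel-verified Lean document; each statement's English description precedes it below -/
import Mathlib

section
/- Under the same setup: if additionally $\mathbb{E}[Y(1) \mid \mathcal{G}] = \beta_z + f + \beta_u U$ and $\mathbb{E}[Y(0) \mid \mathcal{G}] = f + \beta_u U$ for a $\mathcal{G}$-measurable bounded $f$ and constants $\beta_z, \beta_u$, with $Y(1), Y(0)$ conditionally mean-independent of $Z$ given $\mathcal{G}$ (i.e., $\mathbb{E}[Z Y(1) \mid \mathcal{G}] = e_1 \mathbb{E}[Y(1) \mid \mathcal{G}]$ and $\mathbb{E}[(1-Z) Y(0) \mid \mathcal{G}] = (1-e_1)\mathbb{E}[Y(0) \mid \mathcal{G}]$), then with $Y = Z Y(1) + (1-Z) Y(0)$ and $Y(int)$ defined by $\mathbb{E}[Y(int) \mid \mathcal{G}] = e_0 \mathbb{E}[Y(1) \mid \mathcal{G}] + (1 - e_0) \mathbb{E}[Y(0) \mid \mathcal{G}]$, the bias satisfies $\mathbb{E}[Y(int)] - \mathbb{E}[wY] = \beta_u \cdot \mathbb{E}\left[\frac{e_0 - e_1}{1 - e_1}\left(U - \frac{ZU}{e_1}\right)\right]$.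 -/
open MeasureTheory

private lemma intBdd {Ω : Type*} {mΩ : MeasurableSpace Ω} {ℙ : Measure Ω} [IsFiniteMeasure ℙ]
    {g : Ω → ℝ} (hm : AEStronglyMeasurable g ℙ) {C : ℝ} (h : ∀ ω, |g ω| ≤ C) :
    Integrable g ℙ :=
  ⟨hm, HasFiniteIntegral.of_bounded (C := C) (Filter.Eventually.of_forall h)⟩

private lemma pullOut {Ω : Type*} {mΩ : MeasurableSpace Ω} {ℙ : Measure Ω}
    [IsProbabilityMeasure ℙ] {𝒢 : MeasurableSpace Ω} (h𝒢 : 𝒢 ≤ mΩ) {g X : Ω → ℝ}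
    (hg : StronglyMeasurable[𝒢] g)
    (hint : Integrable (fun ω => g ω * X ω) ℙ) (hX : Integrable X ℙ) :
    ∫ ω, g ω * X ω ∂ℙ = ∫ ω, g ω * (ℙ[X|𝒢]) ω ∂ℙ := by
  rw [← integral_condExp h𝒢 (f := fun ω => g ω * X ω)]
  exact integral_congr_ae (condExp_mul_of_stronglyMeasurable_left hg hint hX)

theorem rmpw_ignorability_bias {Ω : Type*} (𝒢 : MeasurableSpace Ω) {mΩ : MeasurableSpace Ω}
    (ℙ : Measure Ω) [IsProbabilityMeasure ℙ]
    (h𝒢 : 𝒢 ≤ mΩ)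
    (Z U Y1 Y0 Yint e0 e1 f : Ω → ℝ) (βz βu : ℝ)
    (hZm : Measurable Z) (hZbin : ∀ ω, Z ω = 0 ∨ Z ω = 1)
    (hUm : StronglyMeasurable[𝒢] U) (hUbd : ∃ C, ∀ ω, |U ω| ≤ C)
    (hY1m : Measurable Y1) (hY0m : Measurable Y0) (hYintm : Measurable Yint)
    (hY1bd : ∃ C, ∀ ω, |Y1 ω| ≤ C) (hY0bd : ∃ C, ∀ ω, |Y0 ω| ≤ C)
    (hYintbd : ∃ C, ∀ ω, |Yint ω| ≤ C)
    (hfm : StronglyMeasurable[𝒢] f) (hfbd : ∃ C, ∀ ω, |f ω| ≤ C)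
    (ε : ℝ) (hε : 0 < ε)
    (he0m : StronglyMeasurable[𝒢] e0) (he1m : StronglyMeasurable[𝒢] e1)
    (he0 : ∀ ω, e0 ω ∈ Set.Ioo ε (1 - ε)) (he1 : ∀ ω, e1 ω ∈ Set.Ioo ε (1 - ε))
    (hcondZ : ℙ[Z|𝒢] =ᵐ[ℙ] e1)
    (hmodel1 : ℙ[Y1|𝒢] =ᵐ[ℙ] fun ω => βz + f ω + βu * U ω)
    (hmodel0 : ℙ[Y0|𝒢] =ᵐ[ℙ] fun ω => f ω + βu * U ω)
    (hig1 : ℙ[fun ω => Z ω * Y1 ω|𝒢] =ᵐ[ℙ] fun ω => e1 ω * (ℙ[Y1|𝒢]) ω)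
    (hig0 : ℙ[fun ω => (1 - Z ω) * Y0 ω|𝒢] =ᵐ[ℙ] fun ω => (1 - e1 ω) * (ℙ[Y0|𝒢]) ω)
    (hYint : ℙ[Yint|𝒢] =ᵐ[ℙ]
      fun ω => e0 ω * (ℙ[Y1|𝒢]) ω + (1 - e0 ω) * (ℙ[Y0|𝒢]) ω) :
    (∫ ω, Yint ω ∂ℙ) -
        ∫ ω, (e0 ω / e1 ω * Z ω + (1 - e0 ω) / (1 - e1 ω) * (1 - Z ω)) *
          (Z ω * Y1 ω + (1 - Z ω) * Y0 ω) ∂ℙ =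
      βu * ∫ ω, (e0 ω - e1 ω) / (1 - e1 ω) * (U ω - Z ω * U ω / e1 ω) ∂ℙ := by
  obtain ⟨C1, hC1⟩ := hY1bd
  obtain ⟨C0, hC0⟩ := hY0bd
  obtain ⟨CU, hCU⟩ := hUbd
  obtain ⟨CI, hCI⟩ := hYintbd
  have he0M : Measurable[mΩ] e0 := (he0m.measurable).mono h𝒢 le_rfl
  have he1M : Measurable[mΩ] e1 := (he1m.measurable).mono h𝒢 le_rfl
  have hUM : Measurable[mΩ] U := (hUm.measurable).mono h𝒢 le_rfl
  have hZM : Measurable[mΩ] Z := hZm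
  have hY1M : Measurable[mΩ] Y1 := hY1m
  have hY0M : Measurable[mΩ] Y0 := hY0m
  have hYintM : Measurable[mΩ] Yint := hYintm
  have he1pos : ∀ ω, 0 < e1 ω := fun ω => hε.trans (he1 ω).1
  have he1lt : ∀ ω, e1 ω < 1 := fun ω => by linarith [(he1 ω).2, hε]
  have he1ne : ∀ ω, e1 ω ≠ 0 := fun ω => (he1pos ω).ne'
  have h1e1ne : ∀ ω, (1 : ℝ) - e1 ω ≠ 0 := fun ω => by linarith [(he1 ω).2, hε]
  -- bounds
  have hZbd : ∀ ω, ‖Z ω‖ ≤ 1 := fun ω => by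
    rcases hZbin ω with h | h <;> simp [h]
  have hZ1bd : ∀ ω, ‖1 - Z ω‖ ≤ 1 := fun ω => by
    rcases hZbin ω with h | h <;> simp [h]
  have hb1 : ∀ ω, ‖e0 ω / e1 ω‖ ≤ (1 - ε) / ε := fun ω => by
    have h0 := he0 ω; have h1 := he1 ω
    rw [Real.norm_eq_abs,
      abs_of_nonneg (div_nonneg (le_of_lt (hε.trans h0.1)) (le_of_lt (hε.trans h1.1)))]
    exact div_le_div₀ (by linarith [h0.1, h0.2] : (0:ℝ) ≤ 1 - ε) (le_of_lt h0.2) hε (le_of_lt h1.1)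
  have hb0 : ∀ ω, ‖(1 - e0 ω) / (1 - e1 ω)‖ ≤ (1 - ε) / ε := fun ω => by
    have h0 := he0 ω; have h1 := he1 ω
    rw [Real.norm_eq_abs,
      abs_of_nonneg (div_nonneg (by linarith [h0.2]) (by linarith [h1.2]))]
    exact div_le_div₀ (by linarith [h0.1, h0.2] : (0:ℝ) ≤ 1 - ε) (by linarith [h0.1]) hε
      (by linarith [h1.2])
  have hbh : ∀ ω, ‖(e0 ω - e1 ω) / (1 - e1 ω)‖ ≤ 1 / ε := fun ω => by
    have h0 := he0 ω; have h1 := he1 ω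
    rw [Real.norm_eq_abs, abs_div]
    refine div_le_div₀ zero_le_one ?_ hε ?_
    · exact abs_le.mpr ⟨by linarith [h0.1, h1.2], by linarith [h0.2, h1.1]⟩
    · rw [abs_of_pos (by linarith [h1.2] : (0:ℝ) < 1 - e1 ω)]; linarith [h1.2]
  have hbk : ∀ ω, ‖(e0 ω - e1 ω) / (1 - e1 ω) / e1 ω * U ω‖ ≤ 1 / ε / ε * CU := fun ω => by
    have h1 := he1 ω
    rw [Real.norm_eq_abs, abs_mul]
    refine mul_le_mul ?_ (hCU ω) (abs_nonneg _) (by positivity)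
    rw [abs_div]
    refine div_le_div₀ (by positivity) (hbh ω) hε ?_
    rw [abs_of_pos (he1pos ω)]; exact le_of_lt h1.1
  -- integrability
  have hY1int : Integrable Y1 ℙ := intBdd hY1M.aestronglyMeasurable hC1
  have hY0int : Integrable Y0 ℙ := intBdd hY0M.aestronglyMeasurable hC0
  have hUint : Integrable U ℙ := intBdd hUM.aestronglyMeasurable hCU
  have hYintInt : Integrable Yint ℙ := intBdd hYintM.aestronglyMeasurable hCI
  have hZint : Integrable Z ℙ := intBdd hZM.aestronglyMeasurable
    (fun ω => by simpa [Real.norm_eq_abs] using hZbd ω)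
  have hZY1 : Integrable (fun ω => Z ω * Y1 ω) ℙ :=
    hY1int.bdd_mul hZM.aestronglyMeasurable (Filter.Eventually.of_forall hZbd)
  have hZ0Y0 : Integrable (fun ω => (1 - Z ω) * Y0 ω) ℙ :=
    hY0int.bdd_mul (measurable_const.sub hZM).aestronglyMeasurable (Filter.Eventually.of_forall hZ1bd)
  have hT1 : Integrable (fun ω => e0 ω / e1 ω * (Z ω * Y1 ω)) ℙ :=
    hZY1.bdd_mul (he0M.div he1M).aestronglyMeasurable (Filter.Eventually.of_forall hb1)
  have hT0 : Integrable (fun ω => (1 - e0 ω) / (1 - e1 ω) * ((1 - Z ω) * Y0 ω)) ℙ :=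
    hZ0Y0.bdd_mul ((measurable_const.sub he0M).div (measurable_const.sub he1M)).aestronglyMeasurable
      (Filter.Eventually.of_forall hb0)
  have he0bd : ∀ ω, ‖e0 ω‖ ≤ 1 := fun ω => by
    have h0 := he0 ω
    rw [Real.norm_eq_abs, abs_of_pos (hε.trans h0.1)]; linarith [h0.2]
  have h1e0bd : ∀ ω, ‖1 - e0 ω‖ ≤ 1 := fun ω => by
    have h0 := he0 ω
    rw [Real.norm_eq_abs, abs_of_pos (by linarith [h0.2] : (0:ℝ) < 1 - e0 ω)]
    linarith [h0.1]
  have hE1 : Integrable (fun ω => e0 ω * (ℙ[Y1|𝒢]) ω) ℙ :=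
    integrable_condExp.bdd_mul he0M.aestronglyMeasurable (Filter.Eventually.of_forall he0bd)
  have hE0 : Integrable (fun ω => (1 - e0 ω) * (ℙ[Y0|𝒢]) ω) ℙ :=
    integrable_condExp.bdd_mul (measurable_const.sub he0M).aestronglyMeasurable (Filter.Eventually.of_forall h1e0bd)
  -- the weighted-outcome integral
  have hwY : (∫ ω, (e0 ω / e1 ω * Z ω + (1 - e0 ω) / (1 - e1 ω) * (1 - Z ω)) *
        (Z ω * Y1 ω + (1 - Z ω) * Y0 ω) ∂ℙ) = ∫ ω, Yint ω ∂ℙ := by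
    have hpt : ∀ ω, (e0 ω / e1 ω * Z ω + (1 - e0 ω) / (1 - e1 ω) * (1 - Z ω)) *
        (Z ω * Y1 ω + (1 - Z ω) * Y0 ω) =
        e0 ω / e1 ω * (Z ω * Y1 ω) + (1 - e0 ω) / (1 - e1 ω) * ((1 - Z ω) * Y0 ω) := fun ω => by
      rcases hZbin ω with h | h <;> rw [h] <;> ring
    rw [integral_congr_ae (Filter.Eventually.of_forall hpt), integral_add hT1 hT0]
    have hp1 : (∫ ω, e0 ω / e1 ω * (Z ω * Y1 ω) ∂ℙ) = ∫ ω, e0 ω * (ℙ[Y1|𝒢]) ω ∂ℙ := by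
      rw [pullOut h𝒢 (show StronglyMeasurable[𝒢] (fun ω => e0 ω / e1 ω) from
        (he0m.measurable.div he1m.measurable).stronglyMeasurable) hT1 hZY1]
      refine integral_congr_ae (hig1.mono fun ω hω => ?_)
      dsimp only
      rw [hω]
      have h1 := he1ne ω
      have h2 := h1e1ne ω
      field_simp
      try ring
    have hp0 : (∫ ω, (1 - e0 ω) / (1 - e1 ω) * ((1 - Z ω) * Y0 ω) ∂ℙ) =
        ∫ ω, (1 - e0 ω) * (ℙ[Y0|𝒢]) ω ∂ℙ := by
      rw [pullOut h𝒢 (show StronglyMeasurable[𝒢] (fun ω => (1 - e0 ω) / (1 - e1 ω)) from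
        ((measurable_const.sub he0m.measurable).div
          (measurable_const.sub he1m.measurable)).stronglyMeasurable) hT0 hZ0Y0]
      refine integral_congr_ae (hig0.mono fun ω hω => ?_)
      dsimp only
      rw [hω]
      have h1 := he1ne ω
      have h2 := h1e1ne ω
      field_simp
      try ring
    rw [hp1, hp0, ← integral_add hE1 hE0, ← integral_condExp h𝒢 (f := Yint)]
    exact (integral_congr_ae hYint).symm
  -- the U-term integral is zero
  have hUterm : (∫ ω, (e0 ω - e1 ω) / (1 - e1 ω) * (U ω - Z ω * U ω / e1 ω) ∂ℙ) = 0 := by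
    have hpt : ∀ ω, (e0 ω - e1 ω) / (1 - e1 ω) * (U ω - Z ω * U ω / e1 ω) =
        (e0 ω - e1 ω) / (1 - e1 ω) * U ω -
          ((e0 ω - e1 ω) / (1 - e1 ω) / e1 ω * U ω) * Z ω := fun ω => by
      have h1 := he1ne ω
      have h2 := h1e1ne ω
      field_simp
      try ring
    have hhU : Integrable (fun ω => (e0 ω - e1 ω) / (1 - e1 ω) * U ω) ℙ :=
      hUint.bdd_mul ((he0M.sub he1M).div (measurable_const.sub he1M)).aestronglyMeasurable
        (Filter.Eventually.of_forall hbh)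
    have hkUZ : Integrable (fun ω => ((e0 ω - e1 ω) / (1 - e1 ω) / e1 ω * U ω) * Z ω) ℙ :=
      hZint.bdd_mul ((((he0M.sub he1M).div (measurable_const.sub he1M)).div he1M).mul
        hUM).aestronglyMeasurable (Filter.Eventually.of_forall hbk)
    rw [integral_congr_ae (Filter.Eventually.of_forall hpt), integral_sub hhU hkUZ]
    have hp : (∫ ω, ((e0 ω - e1 ω) / (1 - e1 ω) / e1 ω * U ω) * Z ω ∂ℙ) =
        ∫ ω, (e0 ω - e1 ω) / (1 - e1 ω) * U ω ∂ℙ := by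
      rw [pullOut h𝒢 (show StronglyMeasurable[𝒢]
          (fun ω => (e0 ω - e1 ω) / (1 - e1 ω) / e1 ω * U ω) from
        ((((he0m.measurable.sub he1m.measurable).div
          (measurable_const.sub he1m.measurable)).div he1m.measurable).mul
          hUm.measurable).stronglyMeasurable) hkUZ hZint]
      refine integral_congr_ae (hcondZ.mono fun ω hω => ?_)
      dsimp only
      rw [hω]
      have h1 := he1ne ω
      have h2 := h1e1ne ω
      field_simp
      try ring
    rw [hp, sub_self]
  rw [hwY, hUterm, sub_self, mul_zero]
end

section
/- Under the conditional ignorability setup: with $\mathcal{G}$-measurable propensity scores $e_0, e_1 \in (\epsilon, 1-\epsilon)$, $\mathbb{E}[Z \mid \mathcal{G}] = e_1$, bounded potential outcomes satisfying $\mathbb{E}[ZY(1) \mid \mathcal{G}] = e_1 \mathbb{E}[Y(1)\mid\mathcal{G}]$ and $\mathbb{E}[(1-Z)Y(0)\mid\mathcal{G}] = (1-e_1)\mathbb{E}[Y(0)\mid\mathcal{G}]$, and $w = \frac{e_0}{e_1}Z + \frac{1-e_0}{1-e_1}(1-Z)$, $Y = ZY(1) + (1-Z)Y(0)$, we have $\mathbb{E}[wY]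 = \mathbb{E}\left[e_0 \, \mathbb{E}[Y(1)\mid\mathcal{G}] + (1-e_0)\,\mathbb{E}[Y(0)\mid\mathcal{G}]\right]$. -/
open MeasureTheory

theorem rmpw_identification {Ω : Type*} (𝒢 : MeasurableSpace Ω) {mΩ : MeasurableSpace Ω}
    (ℙ : Measure Ω) [IsProbabilityMeasure ℙ]
    (h𝒢 : 𝒢 ≤ mΩ)
    (Z Y1 Y0 e0 e1 : Ω → ℝ)
    (hZm : Measurable Z) (hZbin : ∀ ω, Z ω = 0 ∨ Z ω = 1)
    (hY1m : Measurable Y1) (hY0m : Measurable Y0)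
    (hY1bd : ∃ C, ∀ ω, |Y1 ω| ≤ C) (hY0bd : ∃ C, ∀ ω, |Y0 ω| ≤ C)
    (ε : ℝ) (hε : 0 < ε)
    (he0m : StronglyMeasurable[𝒢] e0) (he1m : StronglyMeasurable[𝒢] e1)
    (he0 : ∀ ω, e0 ω ∈ Set.Ioo ε (1 - ε)) (he1 : ∀ ω, e1 ω ∈ Set.Ioo ε (1 - ε))
    (hcondZ : ℙ[Z|𝒢] =ᵐ[ℙ] e1)
    (hig1 : ℙ[fun ω => Z ω * Y1 ω|𝒢] =ᵐ[ℙ] fun ω => e1 ω * (ℙ[Y1|𝒢]) ω)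
    (hig0 : ℙ[fun ω => (1 - Z ω) * Y0 ω|𝒢] =ᵐ[ℙ] fun ω => (1 - e1 ω) * (ℙ[Y0|𝒢]) ω) :
    ∫ ω, (e0 ω / e1 ω * Z ω + (1 - e0 ω) / (1 - e1 ω) * (1 - Z ω)) *
        (Z ω * Y1 ω + (1 - Z ω) * Y0 ω) ∂ℙ =
      ∫ ω, e0 ω * (ℙ[Y1|𝒢]) ω + (1 - e0 ω) * (ℙ[Y0|𝒢]) ω ∂ℙ := by
  obtain ⟨C1, hC1⟩ := hY1bd
  obtain ⟨C0, hC0⟩ := hY0bd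
  have he1ne : ∀ ω, e1 ω ≠ 0 := fun ω => ne_of_gt (lt_trans hε (he1 ω).1)
  have he1ne' : ∀ ω, 1 - e1 ω ≠ 0 := fun ω => by
    have := (he1 ω).2; intro h; nlinarith
  -- functions
  set f1 : Ω → ℝ := fun ω => e0 ω / e1 ω with hf1def
  set f0 : Ω → ℝ := fun ω => (1 - e0 ω) / (1 - e1 ω) with hf0def
  set g1 : Ω → ℝ := fun ω => Z ω * Y1 ω with hg1def
  set g0 : Ω → ℝ := fun ω => (1 - Z ω) * Y0 ω with hg0def
  have hZ01 : ∀ ω, ‖Z ω‖ ≤ 1 := fun ω => by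
    rcases hZbin ω with h | h <;> simp [h]
  -- measurability
  have hf1sm : StronglyMeasurable[𝒢] f1 :=
    (he0m.measurable.div he1m.measurable).stronglyMeasurable
  have hf0sm : StronglyMeasurable[𝒢] f0 :=
    ((measurable_const.sub he0m.measurable).div
      (measurable_const.sub he1m.measurable)).stronglyMeasurable
  have hZM : Measurable[mΩ] Z := hZm
  have hY1M : Measurable[mΩ] Y1 := hY1m
  have hY0M : Measurable[mΩ] Y0 := hY0m
  have he0M : Measurable[mΩ] e0 := he0m.measurable.mono h𝒢 le_rfl
  have he1M : Measurable[mΩ] e1 := he1m.measurable.mono h𝒢 le_rfl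
  have hf1m : Measurable[mΩ] f1 := by rw [hf1def]; exact he0M.div he1M
  have hf0m : Measurable[mΩ] f0 := by
    rw [hf0def]; exact (measurable_const.sub he0M).div (measurable_const.sub he1M)
  -- bounds on f1, f0
  have hf1bd : ∀ ω, ‖f1 ω‖ ≤ 1 / ε := fun ω => by
    have h0 := he0 ω; have h1 := he1 ω
    rw [Real.norm_eq_abs, abs_div, abs_of_pos (lt_trans hε h0.1),
      abs_of_pos (lt_trans hε h1.1)]
    exact div_le_div₀ zero_le_one (by linarith [h0.2]) hε (le_of_lt h1.1)
  have hf0bd : ∀ ω, ‖f0 ω‖ ≤ 1 / ε := fun ω => by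
    have h0 := he0 ω; have h1 := he1 ω
    rw [Real.norm_eq_abs, abs_div, abs_of_pos (by linarith [h0.2] : (0:ℝ) < 1 - e0 ω),
      abs_of_pos (by linarith [h1.2] : (0:ℝ) < 1 - e1 ω)]
    exact div_le_div₀ zero_le_one (by linarith [h0.1]) hε (by linarith [h1.2])
  -- integrability
  have hg1ae : AEStronglyMeasurable[mΩ] g1 ℙ := by
    rw [hg1def]; exact (hZM.mul hY1M).aestronglyMeasurable
  have hg0ae : AEStronglyMeasurable[mΩ] g0 ℙ := by
    rw [hg0def]; exact ((measurable_const.sub hZM).mul hY0M).aestronglyMeasurable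
  have hg1i : Integrable g1 ℙ := by
    refine Integrable.mono' (integrable_const C1) hg1ae
      (Filter.Eventually.of_forall fun ω => ?_)
    calc ‖Z ω * Y1 ω‖ ≤ ‖Z ω‖ * ‖Y1 ω‖ := by rw [norm_mul]
    _ ≤ 1 * C1 := mul_le_mul (hZ01 ω) (hC1 ω) (norm_nonneg _)
        zero_le_one
    _ = C1 := one_mul _
  have hg0i : Integrable g0 ℙ := by
    refine Integrable.mono' (integrable_const (2 * C0)) hg0ae
      (Filter.Eventually.of_forall fun ω => ?_)
    have h1 : ‖1 - Z ω‖ ≤ 2 := by rcases hZbin ω with h | h <;> norm_num [h]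
    have h2 : (0:ℝ) ≤ C0 := le_trans (abs_nonneg _) (hC0 ω)
    calc ‖(1 - Z ω) * Y0 ω‖ = ‖1 - Z ω‖ * ‖Y0 ω‖ := norm_mul _ _
    _ ≤ 2 * C0 := mul_le_mul h1 (hC0 ω) (norm_nonneg _) (by norm_num)
  have hf1ae : AEStronglyMeasurable[mΩ] f1 ℙ := hf1m.aestronglyMeasurable
  have hf0ae : AEStronglyMeasurable[mΩ] f0 ℙ := hf0m.aestronglyMeasurable
  have hf1g1i : Integrable (fun ω => f1 ω * g1 ω) ℙ := hg1i.bdd_mul hf1ae (Filter.Eventually.of_forall hf1bd)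
  have hf0g0i : Integrable (fun ω => f0 ω * g0 ω) ℙ := hg0i.bdd_mul hf0ae (Filter.Eventually.of_forall hf0bd)
  have he0bd : ∀ ω, ‖e0 ω‖ ≤ 1 := fun ω => by
    have := he0 ω; rw [Real.norm_eq_abs, abs_of_pos (lt_trans hε this.1)]; linarith [this.2]
  have he0bd' : ∀ ω, ‖1 - e0 ω‖ ≤ 1 := fun ω => by
    have := he0 ω
    rw [Real.norm_eq_abs, abs_of_pos (by linarith [this.2] : (0:ℝ) < 1 - e0 ω)]
    linarith [this.1]
  have hI1 : Integrable (fun ω => e0 ω * (ℙ[Y1|𝒢]) ω) ℙ :=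
    (integrable_condExp (m := 𝒢)).bdd_mul (he0M.aestronglyMeasurable) (Filter.Eventually.of_forall he0bd)
  have hI0 : Integrable (fun ω => (1 - e0 ω) * (ℙ[Y0|𝒢]) ω) ℙ :=
    (integrable_condExp (m := 𝒢)).bdd_mul
      (measurable_const.sub he0M).aestronglyMeasurable (Filter.Eventually.of_forall he0bd')
  -- pointwise rewrite of the LHS integrand
  have hpt : ∀ ω, (e0 ω / e1 ω * Z ω + (1 - e0 ω) / (1 - e1 ω) * (1 - Z ω)) *
      (Z ω * Y1 ω + (1 - Z ω) * Y0 ω) = f1 ω * g1 ω + f0 ω * g0 ω := by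
    intro ω
    simp only [hf1def, hf0def, hg1def, hg0def]
    rcases hZbin ω with h | h <;> simp [h] <;> ring
  rw [integral_congr_ae (Filter.Eventually.of_forall hpt)]
  rw [integral_add hf1g1i hf0g0i, integral_add hI1 hI0]
  congr 1
  · -- first term
    have h1 : ℙ[fun ω => f1 ω * g1 ω|𝒢] =ᵐ[ℙ] fun ω => f1 ω * (ℙ[g1|𝒢]) ω :=
      condExp_mul_of_stronglyMeasurable_left hf1sm hf1g1i hg1i
    have h2 : (fun ω => f1 ω * (ℙ[g1|𝒢]) ω) =ᵐ[ℙ]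
        fun ω => e0 ω * (ℙ[Y1|𝒢]) ω := by
      filter_upwards [hig1] with ω hω
      simp only [hg1def] at hω ⊢
      rw [hω, hf1def]
      have := he1ne ω
      field_simp
    calc ∫ ω, f1 ω * g1 ω ∂ℙ = ∫ ω, (ℙ[fun ω => f1 ω * g1 ω|𝒢]) ω ∂ℙ :=
          (integral_condExp h𝒢).symm
    _ = ∫ ω, e0 ω * (ℙ[Y1|𝒢]) ω ∂ℙ := integral_congr_ae (h1.trans h2)
  · have h1 : ℙ[fun ω => f0 ω * g0 ω|𝒢] =ᵐ[ℙ] fun ω => f0 ω * (ℙ[g0|𝒢]) ω :=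
      condExp_mul_of_stronglyMeasurable_left hf0sm hf0g0i hg0i
    have h2 : (fun ω => f0 ω * (ℙ[g0|𝒢]) ω) =ᵐ[ℙ]
        fun ω => (1 - e0 ω) * (ℙ[Y0|𝒢]) ω := by
      filter_upwards [hig0] with ω hω
      simp only [hg0def] at hω ⊢
      rw [hω, hf0def]
      have := he1ne' ω
      field_simp
    calc ∫ ω, f0 ω * g0 ω ∂ℙ = ∫ ω, (ℙ[fun ω => f0 ω * g0 ω|𝒢]) ω ∂ℙ :=
          (integral_condExp h𝒢).symm
    _ = ∫ ω, (1 - e0 ω) * (ℙ[Y0|𝒢]) ω ∂ℙ := integral_congr_ae (h1.trans h2)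
end

section
/- Let $Y_1, \dots, Y_n \in \{0, 1\}$ (binary outcomes) and $w_1, \dots, w_n > 0$, with at least one $Y_i = 1$ and at least one $Y_i = 0$. Fix $\Lambda \geq 1$. Then the maximum of $\hat\mu(r) = \frac{\sum_i r_i w_i Y_i}{\sum_i r_i w_i}$ over $r \in [\Lambda^{-1}, \Lambda]^n$ equals $\frac{\Lambda \sum_{i : Y_i = 1} w_i}{\Lambda \sum_{i: Y_i = 1} w_i + \Lambda^{-1} \sum_{i : Y_i = 0} w_i}$, attained by setting $r_i = \Lambda$ when $Y_i = 1$ and $r_i = \Lambda^{-1}$ when $Y_i = 0$. -/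
theorem binary_outcome_fractional_lp (n : ℕ) (hn : 0 < n) (Y w : Fin n → ℝ)
    (hY : ∀ i, Y i = 0 ∨ Y i = 1) (hw : ∀ i, 0 < w i)
    (hone : ∃ i, Y i = 1) (hzero : ∃ i, Y i = 0)
    (Λ : ℝ) (hΛ : 1 ≤ Λ) :
    (∀ r : Fin n → ℝ, (∀ i, r i ∈ Set.Icc Λ⁻¹ Λ) →
        (∑ i, r i * w i * Y i) / (∑ i, r i * w i) ≤
          (Λ * ∑ i ∈ Finset.univ.filter (fun i => Y i = 1), w i) /
            (Λ * (∑ i ∈ Finset.univ.filter (fun i => Y i = 1), w i) +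
              Λ⁻¹ * (∑ i ∈ Finset.univ.filter (fun i => Y i = 0), w i))) ∧
    (∑ i, (if Y i = 1 then Λ else Λ⁻¹) * w i * Y i) /
        (∑ i, (if Y i = 1 then Λ else Λ⁻¹) * w i) =
      (Λ * ∑ i ∈ Finset.univ.filter (fun i => Y i = 1), w i) /
        (Λ * (∑ i ∈ Finset.univ.filter (fun i => Y i = 1), w i) +
          Λ⁻¹ * (∑ i ∈ Finset.univ.filter (fun i => Y i = 0), w i)) := by
  classical
  have hΛ0 : (0:ℝ) < Λ := lt_of_lt_of_le one_pos hΛ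
  have hΛi : (0:ℝ) < Λ⁻¹ := inv_pos.2 hΛ0
  set S1 := Finset.univ.filter (fun i => Y i = 1) with hS1
  set S0 := Finset.univ.filter (fun i => Y i = 0) with hS0
  have hfilter : Finset.univ.filter (fun i => ¬ Y i = 1) = S0 := by
    rw [hS0]; apply Finset.filter_congr; intro i _
    rcases hY i with h | h <;> simp [h]
  have hsplit : ∀ f : Fin n → ℝ, ∑ i, f i = ∑ i ∈ S1, f i + ∑ i ∈ S0, f i := by
    intro f
    rw [← hfilter, hS1, Finset.sum_filter_add_sum_filter_not]
  have hY1 : ∀ f : Fin n → ℝ, ∑ i, f i * Y i = ∑ i ∈ S1, f i := by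
    intro f
    rw [hsplit (fun i => f i * Y i)]
    have h1 : ∑ i ∈ S1, f i * Y i = ∑ i ∈ S1, f i := by
      apply Finset.sum_congr rfl
      intro i hi
      rw [hS1] at hi
      simp only [Finset.mem_filter] at hi
      rw [hi.2, mul_one]
    have h0 : ∑ i ∈ S0, f i * Y i = 0 := by
      apply Finset.sum_eq_zero
      intro i hi
      rw [hS0] at hi
      simp only [Finset.mem_filter] at hi
      rw [hi.2, mul_zero]
    rw [h1, h0, add_zero]
  set A := ∑ i ∈ S1, w i with hAdef
  set B := ∑ i ∈ S0, w i with hBdef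
  have hS1ne : S1.Nonempty := by
    obtain ⟨i, hi⟩ := hone; exact ⟨i, by simp [hS1, hi]⟩
  have hS0ne : S0.Nonempty := by
    obtain ⟨i, hi⟩ := hzero; exact ⟨i, by simp [hS0, hi]⟩
  have hA : 0 < A := Finset.sum_pos (fun i _ => hw i) hS1ne
  have hB : 0 < B := Finset.sum_pos (fun i _ => hw i) hS0ne
  constructor
  · intro r hr
    set N := ∑ i ∈ S1, r i * w i with hNdef
    set M := ∑ i ∈ S0, r i * w i with hMdef
    have hnum : ∑ i, r i * w i * Y i = N := hY1 _
    have hden : ∑ i, r i * w i = N + M := hsplit _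
    have hNpos : 0 < N :=
      Finset.sum_pos (fun i _ => mul_pos (lt_of_lt_of_le hΛi (hr i).1) (hw i)) hS1ne
    have hMpos : 0 < M :=
      Finset.sum_pos (fun i _ => mul_pos (lt_of_lt_of_le hΛi (hr i).1) (hw i)) hS0ne
    have hNle : N ≤ Λ * A := by
      rw [hAdef, Finset.mul_sum]
      exact Finset.sum_le_sum (fun i _ => mul_le_mul_of_nonneg_right (hr i).2 (hw i).le)
    have hMge : Λ⁻¹ * B ≤ M := by
      rw [hBdef, Finset.mul_sum]
      exact Finset.sum_le_sum (fun i _ => mul_le_mul_of_nonneg_right (hr i).1 (hw i).le)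
    rw [hnum, hden, div_le_div_iff₀ (by linarith) (by positivity)]
    have key : N * (Λ⁻¹ * B) ≤ (Λ * A) * M :=
      mul_le_mul hNle hMge (by positivity) (by positivity)
    nlinarith
  · have hnum : ∑ i, (if Y i = 1 then Λ else Λ⁻¹) * w i * Y i = Λ * A := by
      rw [hY1, hAdef, Finset.mul_sum]
      apply Finset.sum_congr rfl
      intro i hi
      simp only [hS1, Finset.mem_filter] at hi
      rw [if_pos hi.2]
    have hden : ∑ i, (if Y i = 1 then Λ else Λ⁻¹) * w i = Λ * A + Λ⁻¹ * B := by
      rw [hsplit]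
      congr 1
      · rw [hAdef, Finset.mul_sum]
        apply Finset.sum_congr rfl
        intro i hi
        simp only [hS1, Finset.mem_filter] at hi
        rw [if_pos hi.2]
      · rw [hBdef, Finset.mul_sum]
        apply Finset.sum_congr rfl
        intro i hi
        simp only [hS0, Finset.mem_filter] at hi
        rw [if_neg (by rw [hi.2]; norm_num)]
    rw [hnum, hden]
end
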